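/- Suppose x = x_1 x_2 ⋯ x_n and y = y_1 y_2 ⋯ y_n are decompositions of the strings x and y into n consecutive substrings such that there exists a best possible match between x and y in which every term of x_i that is matched with some term of y is matched with a term of y_i (for each i = 1, …, n). Then f̄(x, y) = Σ_{i=1}^{n} f̄(x_i, y_i)·v_i, where v_i = (|x_i| + |y_i|)/(|x| + |y|). -/

import Mathlib

open MeasureTheory

namespace Paper

variable {σ : Type*}

/-- The concatenation of `t` copies of the string `w`. -/
def rep (w : List σ) (t : ℕ) : List σ := (List.replicate t w).flatten

/-- `I` is a match between the strings `a` and `b` (with 0-based indices):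
a collection of pairs of indices, strictly increasing in both coordinates,
pairing equal symbols. -/
def IsMatch (a b : List σ) (I : List (ℕ × ℕ)) : Prop :=
  I.Chain' (fun p q => p.1 < q.1 ∧ p.2 < q.2) ∧
  ∀ p ∈ I, p.1 < a.length ∧ p.2 < b.length ∧ a[p.1]? = b[p.2]?

/-- The largest cardinality of a match between `a` and `b`. -/
noncomputable def maxMatch (a b : List σ) : ℕ :=
  sSup {r | ∃ I, IsMatch a b I ∧ I.length = r}

/-- The `f̄` distance between two strings. -/
noncomputable def fbar (a b : List σ) : ℝ :=
  1 - 2 * (maxMatch a b : ℝ) / (a.length + b.length)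

/-- `I` is an approximate match between the strings `a` and `b` (0-based indices):
pairs of indices, nondecreasing in each coordinate and strictly increasing as pairs,
pairing equal symbols, such that the set of indices paired with any given index is
contained in a set of three consecutive indices. -/
def IsApproxMatch (a b : List σ) (I : List (ℕ × ℕ)) : Prop :=
  I.Chain' (fun p q => p.1 ≤ q.1 ∧ p.2 ≤ q.2 ∧ p ≠ q) ∧
  (∀ p ∈ I, p.1 < a.length ∧ p.2 < b.length ∧ a[p.1]? = b[p.2]?) ∧
  (∀ p ∈ I, (∃ s, ∀ q ∈ I, q.1 = p.1 → q.2 ∈ ({s, s+1, s+2} : Set ℕ)) ∧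
            (∃ t, ∀ q ∈ I, q.2 = p.2 → q.1 ∈ ({t, t+1, t+2} : Set ℕ)))

/-- The largest cardinality of an approximate match between `a` and `b`. -/
noncomputable def maxApproxMatch (a b : List σ) : ℕ :=
  sSup {r | ∃ I, IsApproxMatch a b I ∧ I.length = r}

/-- The approximate distance `f̃` between two strings. -/
noncomputable def ftilde (a b : List σ) : ℝ :=
  max 0 (1 - 2 * (maxApproxMatch a b : ℝ) / (a.length + b.length))

/-! Concatenating best matches of the blocks gives a match of `x` and `y`, so the block maxima
add up to at most the maximum for `x` and `y`; conversely, a best match that respects the blocks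
splits into matches of the blocks, so equality holds. Since
`f̄(a, b) · (|a| + |b|) = |a| + |b| - 2 · maxMatch a b`, the identity is then a matter of summing
over the blocks. -/

section Match

variable {a b c d : List σ} {I J : List (ℕ × ℕ)}

theorem isMatch_iff_pairwise :
    IsMatch a b I ↔ I.Pairwise (fun p q => p.1 < q.1 ∧ p.2 < q.2) ∧
      ∀ p ∈ I, p.1 < a.length ∧ p.2 < b.length ∧ a[p.1]? = b[p.2]? := by
  let R : ℕ × ℕ → ℕ × ℕ → Prop := fun p q => p.1 < q.1 ∧ p.2 < q.2
  have : Trans R R R := ⟨fun h₁ h₂ => ⟨h₁.1.trans h₂.1, h₁.2.trans h₂.2⟩⟩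
  exact and_congr_left' List.isChain_iff_pairwise

theorem IsMatch.nil : IsMatch a b [] :=
  ⟨List.isChain_nil, by simp⟩

theorem IsMatch.sublist (h : IsMatch a b I) (hJI : J.Sublist I) : IsMatch a b J := by
  rw [isMatch_iff_pairwise] at h ⊢
  exact ⟨h.1.sublist hJI, fun p hp => h.2 p (hJI.subset hp)⟩

theorem IsMatch.length_le (h : IsMatch a b I) : I.length ≤ a.length := by
  have hfst : (I.map Prod.fst).Pairwise (· < ·) :=
    List.pairwise_map.mpr ((isMatch_iff_pairwise.mp h).1.imp And.left)
  calc I.length = (I.map Prod.fst).toFinset.card := by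
        rw [List.toFinset_card_of_nodup (hfst.imp ne_of_lt), List.length_map]
    _ ≤ (Finset.range a.length).card := by
        refine Finset.card_le_card fun i hi => ?_
        obtain ⟨p, hp, rfl⟩ := List.mem_map.mp (List.mem_toFinset.mp hi)
        exact Finset.mem_range.mpr (h.2 p hp).1
    _ = a.length := Finset.card_range _

theorem bddAbove_matchLengths (a b : List σ) :
    BddAbove {r | ∃ I, IsMatch a b I ∧ I.length = r} :=
  ⟨a.length, fun _ ⟨_, hI, hr⟩ => hr ▸ hI.length_le⟩

theorem IsMatch.length_le_maxMatch (h : IsMatch a b I) : I.length ≤ maxMatch a b :=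
  le_csSup (bddAbove_matchLengths a b) ⟨I, h, rfl⟩

theorem exists_isMatch_length_eq_maxMatch (a b : List σ) :
    ∃ I, IsMatch a b I ∧ I.length = maxMatch a b :=
  Nat.sSup_mem (s := {r | ∃ I, IsMatch a b I ∧ I.length = r}) ⟨0, [], IsMatch.nil, rfl⟩
    (bddAbove_matchLengths a b)

theorem maxMatch_le_length (a b : List σ) : maxMatch a b ≤ a.length := by
  obtain ⟨I, hI, hlen⟩ := exists_isMatch_length_eq_maxMatch a b
  exact hlen ▸ hI.length_le

theorem IsMatch.append (hI : IsMatch a b I) (hJ : IsMatch c d J) :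
    IsMatch (a ++ c) (b ++ d) (I ++ J.map fun q => (q.1 + a.length, q.2 + b.length)) := by
  rw [isMatch_iff_pairwise] at hI hJ ⊢
  refine ⟨List.pairwise_append.mpr ⟨hI.1, ?_, ?_⟩, ?_⟩
  · exact List.pairwise_map.mpr (hJ.1.imp fun h => ⟨by omega, by omega⟩)
  · intro p hp q hq
    obtain ⟨q, -, rfl⟩ := List.mem_map.mp hq
    have := hI.2 p hp
    exact ⟨by omega, by omega⟩
  · intro p hp
    rcases List.mem_append.mp hp with hp | hp
    · obtain ⟨h₁, h₂, h₃⟩ := hI.2 p hp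
      simp only [List.length_append, List.getElem?_append_left h₁, List.getElem?_append_left h₂]
      exact ⟨by omega, by omega, h₃⟩
    · obtain ⟨q, hq, rfl⟩ := List.mem_map.mp hp
      obtain ⟨h₁, h₂, h₃⟩ := hJ.2 q hq
      simp only [List.length_append, List.getElem?_append_right (Nat.le_add_left _ _),
        Nat.add_sub_cancel]
      exact ⟨by omega, by omega, h₃⟩

theorem maxMatch_add_maxMatch_le_append (a b c d : List σ) :
    maxMatch a b + maxMatch c d ≤ maxMatch (a ++ c) (b ++ d) := by
  obtain ⟨I, hI, hIlen⟩ := exists_isMatch_length_eq_maxMatch a b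
  obtain ⟨J, hJ, hJlen⟩ := exists_isMatch_length_eq_maxMatch c d
  rw [← hIlen, ← hJlen]
  simpa using (hI.append hJ).length_le_maxMatch

theorem IsMatch.of_append_left (h : IsMatch (a ++ c) (b ++ d) I)
    (hI : ∀ p ∈ I, p.1 < a.length ∧ p.2 < b.length) : IsMatch a b I := by
  rw [isMatch_iff_pairwise] at h ⊢
  refine ⟨h.1, fun p hp => ?_⟩
  obtain ⟨h₁, h₂⟩ := hI p hp
  have h₃ := (h.2 p hp).2.2
  rw [List.getElem?_append_left h₁, List.getElem?_append_left h₂] at h₃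
  exact ⟨h₁, h₂, h₃⟩

theorem IsMatch.of_append_right (h : IsMatch (a ++ c) (b ++ d) I)
    (hI : ∀ p ∈ I, a.length ≤ p.1 ∧ b.length ≤ p.2) :
    IsMatch c d (I.map fun p => (p.1 - a.length, p.2 - b.length)) := by
  rw [isMatch_iff_pairwise] at h ⊢
  refine ⟨List.pairwise_map.mpr (h.1.imp_of_mem fun hp hq hpq => ?_), ?_⟩
  · have := hI _ hp
    have := hI _ hq
    exact ⟨by omega, by omega⟩
  · intro q hq
    obtain ⟨p, hp, rfl⟩ := List.mem_map.mp hq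
    obtain ⟨h₁, h₂⟩ := hI p hp
    obtain ⟨h₁', h₂', h₃⟩ := h.2 p hp
    rw [List.getElem?_append_right h₁, List.getElem?_append_right h₂] at h₃
    simp only [List.length_append] at h₁' h₂'
    exact ⟨by omega, by omega, h₃⟩

end Match

theorem sum_range_length_cons_getD {M : Type*} [AddCommMonoid M] (f : List σ → List σ → M)
    (x y : List σ) (xs ys : List (List σ)) :
    ∑ k ∈ Finset.range (x :: xs).length, f ((x :: xs).getD k []) ((y :: ys).getD k []) =
      f x y + ∑ k ∈ Finset.range xs.length, f (xs.getD k []) (ys.getD k []) := by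
  rw [List.length_cons, Finset.sum_range_succ', add_comm]
  simp only [List.getD_cons_succ, List.getD_cons_zero]

theorem length_flatten_eq_sum_range (xs : List (List σ)) :
    xs.flatten.length = ∑ k ∈ Finset.range xs.length, (xs.getD k []).length := by
  induction xs with
  | nil => simp
  | cons x xs ih =>
    rw [List.flatten_cons, List.length_append, ih, List.length_cons, Finset.sum_range_succ',
      add_comm]
    simp only [List.getD_cons_succ, List.getD_cons_zero]

theorem sum_maxMatch_le_maxMatch_flatten (xs ys : List (List σ)) (hlen : xs.length = ys.length) :
    ∑ k ∈ Finset.range xs.length, maxMatch (xs.getD k []) (ys.getD k []) ≤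
      maxMatch xs.flatten ys.flatten := by
  induction xs generalizing ys with
  | nil => simp
  | cons x xs ih =>
    obtain _ | ⟨y, ys⟩ := ys
    · simp at hlen
    rw [sum_range_length_cons_getD, List.flatten_cons, List.flatten_cons]
    exact (Nat.add_le_add_left (ih ys (by simpa using hlen)) _).trans
      (maxMatch_add_maxMatch_le_append _ _ _ _)

theorem IsMatch.length_le_sum_maxMatch {xs ys : List (List σ)} {I : List (ℕ × ℕ)}
    (hI : IsMatch xs.flatten ys.flatten I)
    (hblocks : ∀ p ∈ I, ∀ k,
      (p.1 < ((xs.take k).flatten).length ↔ p.2 < ((ys.take k).flatten).length)) :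
    I.length ≤ ∑ k ∈ Finset.range xs.length, maxMatch (xs.getD k []) (ys.getD k []) := by
  induction xs generalizing ys I with
  | nil => simpa using hI.length_le
  | cons x xs ih =>
    obtain _ | ⟨y, ys⟩ := ys
    · obtain _ | ⟨p, I⟩ := I
      · exact Nat.zero_le _
      · simpa using (hI.2 p List.mem_cons_self).2.1
    rw [List.flatten_cons, List.flatten_cons] at hI
    have hfirst : ∀ p ∈ I, p.1 < x.length ↔ p.2 < y.length := fun p hp => by
      simpa using hblocks p hp 1
    set I₁ := I.filter fun p => p.1 < x.length
    set I₂ := I.filter fun p => !decide (p.1 < x.length)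
    have hI₁ : IsMatch x y I₁ := (hI.sublist List.filter_sublist).of_append_left fun p hp => by
      have hpx : p.1 < x.length := by simpa using (List.mem_filter.mp hp).2
      exact ⟨hpx, (hfirst p (List.mem_of_mem_filter hp)).mp hpx⟩
    have hI₂_ge : ∀ p ∈ I₂, x.length ≤ p.1 ∧ y.length ≤ p.2 := fun p hp => by
      have hpx : ¬p.1 < x.length := by simpa using (List.mem_filter.mp hp).2
      have := hfirst p (List.mem_of_mem_filter hp)
      omega
    have hI₂ := (hI.sublist List.filter_sublist).of_append_right hI₂_ge
    have hI₂_blocks : ∀ q ∈ I₂.map (fun p : ℕ × ℕ => (p.1 - x.length, p.2 - y.length)), ∀ k,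
        (q.1 < ((xs.take k).flatten).length ↔ q.2 < ((ys.take k).flatten).length) := by
      intro q hq k
      obtain ⟨p, hp, rfl⟩ := List.mem_map.mp hq
      have := hI₂_ge p hp
      have := hblocks p (List.mem_of_mem_filter hp) (k + 1)
      simp only [List.take_succ_cons, List.flatten_cons, List.length_append] at this
      omega
    have hsplit : I.length = I₁.length + I₂.length := I.length_eq_length_filter_add _
    rw [sum_range_length_cons_getD, hsplit]
    exact Nat.add_le_add hI₁.length_le_maxMatch
      ((List.length_map _).symm.trans_le (ih hI₂ hI₂_blocks))

theorem maxMatch_flatten_eq_sum {xs ys : List (List σ)} (hlen : xs.length = ys.length)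
    {I : List (ℕ × ℕ)} (hI : IsMatch xs.flatten ys.flatten I)
    (hbest : I.length = maxMatch xs.flatten ys.flatten)
    (hblocks : ∀ p ∈ I, ∀ k,
      (p.1 < ((xs.take k).flatten).length ↔ p.2 < ((ys.take k).flatten).length)) :
    maxMatch xs.flatten ys.flatten =
      ∑ k ∈ Finset.range xs.length, maxMatch (xs.getD k []) (ys.getD k []) :=
  le_antisymm (hbest ▸ hI.length_le_sum_maxMatch hblocks)
    (sum_maxMatch_le_maxMatch_flatten xs ys hlen)

theorem fbar_mul_length_add (a b : List σ) :
    fbar a b * (a.length + b.length) = a.length + b.length - 2 * (maxMatch a b : ℝ) := by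
  rcases eq_or_ne ((a.length : ℝ) + b.length) 0 with h | h
  · have ha : a.length + b.length = 0 := by exact_mod_cast h
    have := maxMatch_le_length a b
    have hM : maxMatch a b = 0 := by omega
    simp [h, hM]
  · rw [fbar]
    field_simp

end Paper

open Paper List

/-- Suppose `x = x_1 ⋯ x_n` and `y = y_1 ⋯ y_n` are decompositions of the
(not both empty) strings `x` and `y` into `n` consecutive substrings, and there is a best
possible match between `x` and `y` in which every term of `x_i` that is matched is matched
with a term of `y_i` (expressed via prefix lengths: matched indices lie in the same block).
Then `f̄(x,y) = Σ_i f̄(x_i,y_i)·v_i` where `v_i = (|x_i|+|y_i|)/(|x|+|y|)`. -/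
theorem statement2 {σ : Type*} (xs ys : List (List σ)) (hlen : xs.length = ys.length)
    (hpos : 0 < xs.flatten.length + ys.flatten.length)
    (I : List (ℕ × ℕ)) (hI : IsMatch xs.flatten ys.flatten I)
    (hbest : I.length = maxMatch xs.flatten ys.flatten)
    (hblocks : ∀ p ∈ I, ∀ k,
      (p.1 < ((xs.take k).flatten).length ↔ p.2 < ((ys.take k).flatten).length)) :
    fbar xs.flatten ys.flatten =
      ∑ k ∈ Finset.range xs.length,
        fbar (xs.getD k []) (ys.getD k []) *
          (((xs.getD k []).length + (ys.getD k []).length : ℝ) /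
            ((xs.flatten.length : ℝ) + ys.flatten.length)) := by
  have hL : (xs.flatten.length : ℝ) + ys.flatten.length ≠ 0 := by exact_mod_cast hpos.ne'
  have hlengths : (xs.flatten.length : ℝ) + ys.flatten.length =
      ∑ k ∈ Finset.range xs.length, ((xs.getD k []).length + (ys.getD k []).length : ℝ) := by
    rw [Finset.sum_add_distrib, length_flatten_eq_sum_range xs, length_flatten_eq_sum_range ys,
      hlen]
    push_cast
    rfl
  have hmatches : (maxMatch xs.flatten ys.flatten : ℝ) =
      ∑ k ∈ Finset.range xs.length, (maxMatch (xs.getD k []) (ys.getD k []) : ℝ) := by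
    exact_mod_cast maxMatch_flatten_eq_sum hlen hI hbest hblocks
  calc fbar xs.flatten ys.flatten
      = fbar xs.flatten ys.flatten * (xs.flatten.length + ys.flatten.length) /
          (xs.flatten.length + ys.flatten.length) := (mul_div_cancel_right₀ _ hL).symm
    _ = (∑ k ∈ Finset.range xs.length, fbar (xs.getD k []) (ys.getD k []) *
          ((xs.getD k []).length + (ys.getD k []).length)) /
          (xs.flatten.length + ys.flatten.length) := by
        simp only [fbar_mul_length_add, Finset.sum_sub_distrib, ← Finset.mul_sum, ← hlengths,
          hmatches]
    _ = _ := by simp only [Finset.sum_div, mul_div_assoc]
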